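/- arXiv:2402.16884 — 2 statements merged into one kernel-verified Lean document; each statement's English description precedes it below -/
import Mathlib

section
/- In the setting of the previous equivariance identity (integers ⟨u_j,q_i⟩, ⟨p_l,v_j⟩ with ∑_{j=1}^n ⟨p_l,v_j⟩⟨u_j,q_i⟩ = 0 for all l, i, and the polynomial maps f_i(z) = ∏_{j∈I⁺_i} z_j^{⟨u_j,q_i⟩} − e^{⟨a,q_i⟩} ∏_{j∈I⁻_i} z_j^{−⟨u_j,q_i⟩}), let Df(z) denote the (n−k)×n complex Jacobian matrix (∂f_i/∂z_j(z)). Then for every t = (t_1,…,t_k) with |t_l| = 1 and every z ∈ ℂ^n: Df(i_V(t)·z) = 𝒯(t) · Df(z) · 𝒯_V(t), where 𝒯(t) is the diagonal matrix with entries 𝒯_i(t) = ∏_{j∈I⁻_i} ∏_{l=1}^k t_l^{−⟨p_l,v_j⟩⟨u_j,q_i⟩} (i = k+1,…,n) and 𝒯_V(t) is the diagonal matrix with entries ∏_{l=1}^k t_l^{−⟨p_l,v_j⟩} (j = 1,…,n). In particular, the rank of Df(i_V(t)·z) equals the rank of Df(z) for all such t and z. -/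
/-!
Put `c j = ∏ l, t l ^ ⟨p_l, v_j⟩`. The relations `∑ j ⟨p_l, v_j⟩ ⟨u_j, q_i⟩ = 0` say that the
character `∏ j, c j ^ ⟨u_j, q_i⟩` is trivial, so the two monomials of `f i` pick up the same
factor `𝒯_i(t)` under `z ↦ c * z`: `f i (c * z) = 𝒯_i(t) * f i z`. Differentiating this by the
chain rule gives `c j * ∂_j f i (c * z) = 𝒯_i(t) * ∂_j f i z`, which is the matrix identity since
`𝒯_V(t)_j = (c j)⁻¹`. Both diagonal matrices are invertible, so the rank is unchanged.
-/

open Finset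

section CommGroupWithZero

variable {G ι κ : Type*} [CommGroupWithZero G]

theorem prod_zpow_eq_zpow_sum₀ {a : G} (ha : a ≠ 0) (s : Finset ι) (g : ι → ℤ) :
    ∏ i ∈ s, a ^ g i = a ^ ∑ i ∈ s, g i := by
  induction s using Finset.cons_induction with
  | empty => simp
  | cons i s hi ih => rw [prod_cons, sum_cons, zpow_add₀ ha, ih]

variable [Fintype ι] [Fintype κ]

theorem prod_zpow_eq_prod_filter_div (c : ι → G) (A : ι → ℤ) :
    ∏ j, c j ^ A j =
      (∏ j with 0 ≤ A j, c j ^ (A j).toNat) / ∏ j with A j ≤ 0, c j ^ (-A j).toNat := by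
  have hnonneg : ∏ j with 0 ≤ A j, c j ^ (A j).toNat = ∏ j with 0 ≤ A j, c j ^ A j :=
    prod_congr rfl fun j hj => by
      rw [← zpow_natCast, Int.toNat_of_nonneg ((mem_filter_univ j).1 hj)]
  have hnonpos : ∏ j with A j ≤ 0, c j ^ (-A j).toNat = (∏ j with ¬ 0 ≤ A j, c j ^ A j)⁻¹ := by
    rw [← prod_inv_distrib]
    calc ∏ j with A j ≤ 0, c j ^ (-A j).toNat = ∏ j with A j ≤ 0, (c j ^ A j)⁻¹ :=
          prod_congr rfl fun j hj => by
            rw [← zpow_natCast, Int.toNat_of_nonneg (by rw [mem_filter_univ] at hj; omega),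
              zpow_neg]
      _ = ∏ j with ¬ 0 ≤ A j, (c j ^ A j)⁻¹ := by
          refine (prod_subset (fun j => by simp only [mem_filter_univ]; omega)
            fun j hj hj' => ?_).symm
          have : A j = 0 := by rw [mem_filter_univ] at hj hj'; omega
          simp [this]
  rw [hnonneg, hnonpos, div_inv_eq_mul, prod_filter_mul_prod_filter_not]

theorem prod_prod_zpow_zpow_eq_one {t : κ → G} (ht : ∀ l, t l ≠ 0) {E : κ → ι → ℤ} {A : ι → ℤ}
    (h : ∀ l, ∑ j, E l j * A j = 0) : ∏ j, (∏ l, t l ^ E l j) ^ A j = 1 := by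
  simp_rw [← prod_zpow, ← zpow_mul]
  rw [prod_comm]
  exact prod_eq_one fun l _ => by rw [prod_zpow_eq_zpow_sum₀ (ht l), h l, zpow_zero]

theorem prod_filter_nonneg_pow_eq_prod_filter_nonpos_pow {c : ι → G} {A : ι → ℤ}
    (h : ∏ j, c j ^ A j = 1) :
    ∏ j with 0 ≤ A j, c j ^ (A j).toNat = ∏ j with A j ≤ 0, c j ^ (-A j).toNat := by
  rw [prod_zpow_eq_prod_filter_div] at h
  exact eq_of_div_eq_one h

end CommGroupWithZero

theorem prod_zpow_pow_toNat_neg {G κ : Type*} [DivisionCommMonoid G] (s : Finset κ) (t : κ → G)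
    (e : κ → ℤ) {x : ℤ} (hx : x ≤ 0) :
    (∏ l ∈ s, t l ^ e l) ^ (-x).toNat = ∏ l ∈ s, t l ^ (-e l * x) := by
  rw [← zpow_natCast, Int.toNat_of_nonneg (neg_nonneg.2 hx), ← prod_zpow]
  exact prod_congr rfl fun l _ => by rw [← zpow_mul, neg_mul_comm]

section Binomial

variable {R ι : Type*} [CommRing R] [Fintype ι]

def toricBinomial (A : ι → ℤ) (C : R) (w : ι → R) : R :=
  (∏ j with 0 ≤ A j, w j ^ (A j).toNat) - C * ∏ j with A j ≤ 0, w j ^ (-A j).toNat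

theorem toricBinomial_mul {A : ι → ℤ} {c : ι → R}
    (hc : ∏ j with 0 ≤ A j, c j ^ (A j).toNat = ∏ j with A j ≤ 0, c j ^ (-A j).toNat)
    (C : R) (w : ι → R) :
    toricBinomial A C (c * w) = (∏ j with A j ≤ 0, c j ^ (-A j).toNat) * toricBinomial A C w := by
  simp only [toricBinomial, Pi.mul_apply, mul_pow, prod_mul_distrib, hc]
  ring

theorem differentiable_toricBinomial {𝕜 : Type*} [NontriviallyNormedField 𝕜] (A : ι → ℤ)
    (C : 𝕜) :
    Differentiable 𝕜 (toricBinomial A C) := by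
  unfold toricBinomial
  fun_prop

end Binomial

section Jacobian

variable {𝕜 ι κ E F : Type*} [NontriviallyNormedField 𝕜]
  [NormedAddCommGroup E] [NormedSpace 𝕜 E] [NormedAddCommGroup F] [NormedSpace 𝕜 F]

theorem fderiv_comp_eq_smul_of_comp_eq_smul {g : E → F} (hg : Differentiable 𝕜 g) (L : E →L[𝕜] E)
    {μ : 𝕜} (h : ∀ w, g (L w) = μ • g w) (z : E) :
    (fderiv 𝕜 g (L z)).comp L = μ • fderiv 𝕜 g z := by
  have hcomp : g ∘ L = fun w => μ • g w := funext h
  have hchain := fderiv_comp z (hg (L z)) L.differentiableAt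
  rwa [L.fderiv, hcomp, fderiv_fun_const_smul (hg z), eq_comm] at hchain

variable [Fintype ι] [DecidableEq ι] [Fintype κ] [DecidableEq κ]

theorem jacobian_mul_left {g : κ → (ι → 𝕜) → 𝕜} (hg : ∀ i, Differentiable 𝕜 (g i))
    {c : ι → 𝕜} (hc : ∀ j, c j ≠ 0) {μ : κ → 𝕜} (h : ∀ i w, g i (c * w) = μ i * g i w)
    (z : ι → 𝕜) :
    Matrix.of (fun i j => fderiv 𝕜 (g i) (c * z) (Pi.single j 1))
      = Matrix.diagonal μ * Matrix.of (fun i j => fderiv 𝕜 (g i) z (Pi.single j 1))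
        * Matrix.diagonal c⁻¹ := by
  ext i j
  have hsingle : c * Pi.single j 1 = c j • Pi.single j 1 := by
    rw [← Pi.single_mul_right, ← Pi.single_smul', smul_eq_mul]
  have hij : fderiv 𝕜 (g i) (c * z) (c * Pi.single j 1) = μ i * fderiv 𝕜 (g i) z (Pi.single j 1) :=
    DFunLike.congr_fun (fderiv_comp_eq_smul_of_comp_eq_smul (hg i)
      (ContinuousLinearMap.mul 𝕜 _ c) (h i) z) (Pi.single j 1)
  rw [hsingle, map_smul, smul_eq_mul] at hij
  rw [Matrix.mul_diagonal, Matrix.diagonal_mul, Matrix.of_apply, Matrix.of_apply, ← hij,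
    Pi.inv_apply, mul_comm (c j), mul_inv_cancel_right₀ (hc j)]

end Jacobian

theorem Matrix.rank_diagonal_mul_mul_diagonal {K m n : Type*} [Field K] [Fintype m] [Fintype n]
    [DecidableEq m] [DecidableEq n] {d₁ : m → K} {d₂ : n → K} (hd₁ : ∀ i, d₁ i ≠ 0)
    (hd₂ : ∀ j, d₂ j ≠ 0) (M : Matrix m n K) :
    (Matrix.diagonal d₁ * M * Matrix.diagonal d₂).rank = M.rank := by
  rw [Matrix.rank_mul_eq_left_of_isUnit_det, Matrix.rank_mul_eq_right_of_isUnit_det] <;>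
    simp [Matrix.det_diagonal, prod_ne_zero_iff, *]

/-- `T^k`-equivariance of the Jacobian matrix of the defining equations:
`Df (i_V(t)·z) = 𝒯(t) * Df(z) * 𝒯_V(t)` with `𝒯(t)`, `𝒯_V(t)` invertible diagonal matrices;
in particular `rank Df (i_V(t)·z) = rank Df z`. -/
theorem stmt4 (n k : ℕ)
    (u : Fin n → Fin n → ℤ) (q : Fin (n - k) → Fin n → ℤ)
    (a : Fin n → ℝ) (p : Fin k → Fin n → ℤ) (v : Fin n → Fin n → ℤ)
    (hsum : ∀ (l : Fin k) (i : Fin (n - k)),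
      ∑ j, (∑ m, p l m * v j m) * (∑ m, u j m * q i m) = 0)
    (f : Fin (n - k) → (Fin n → ℂ) → ℂ)
    (hf : ∀ i z, f i z =
      (∏ j ∈ univ.filter fun j => 0 ≤ ∑ m, u j m * q i m,
        z j ^ (∑ m, u j m * q i m).toNat)
      - (Real.exp (∑ m, a m * (q i m : ℝ)) : ℂ) *
        ∏ j ∈ univ.filter fun j => (∑ m, u j m * q i m) ≤ 0,
          z j ^ (-∑ m, u j m * q i m).toNat)
    (Df : (Fin n → ℂ) → Matrix (Fin (n - k)) (Fin n) ℂ)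
    (hDf : ∀ z, Df z = Matrix.of fun i j => fderiv ℂ (f i) z (Pi.single j 1))
    (t : Fin k → ℂ) (ht : ∀ l, ‖t l‖ = 1) (z : Fin n → ℂ) :
    Df (fun j => (∏ l, t l ^ (∑ m, p l m * v j m)) * z j)
      = Matrix.diagonal (fun i => ∏ j ∈ univ.filter fun j => (∑ m, u j m * q i m) ≤ 0,
           ∏ l, t l ^ (-(∑ m, p l m * v j m) * (∑ m, u j m * q i m)))
        * Df z
        * Matrix.diagonal (fun j => ∏ l, t l ^ (-(∑ m, p l m * v j m))) ∧
    (Df (fun j => (∏ l, t l ^ (∑ m, p l m * v j m)) * z j)).rank = (Df z).rank := by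
  have ht0 : ∀ l, t l ≠ 0 := fun l h0 => by simpa [h0] using ht l
  set c : Fin n → ℂ := fun j => ∏ l, t l ^ (∑ m, p l m * v j m)
  have hc0 : ∀ j, c j ≠ 0 := fun j => prod_ne_zero_iff.2 fun l _ => zpow_ne_zero _ (ht0 l)
  have hf_eq : ∀ i, f i = toricBinomial (fun j => ∑ m, u j m * q i m)
      (Real.exp (∑ m, a m * (q i m : ℝ)) : ℂ) := fun i => funext (hf i)
  have hjac := jacobian_mul_left (fun i => hf_eq i ▸ differentiable_toricBinomial _ _) hc0
    (fun i w => by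
      rw [hf_eq]
      exact toricBinomial_mul (prod_filter_nonneg_pow_eq_prod_filter_nonpos_pow
        (prod_prod_zpow_zpow_eq_one ht0 (hsum · i))) _ _) z
  rw [← hDf, ← hDf] at hjac
  have hμ : (fun i => ∏ j with (∑ m, u j m * q i m) ≤ 0, c j ^ (-∑ m, u j m * q i m).toNat) =
      fun i => ∏ j with (∑ m, u j m * q i m) ≤ 0,
        ∏ l, t l ^ (-(∑ m, p l m * v j m) * (∑ m, u j m * q i m)) :=
    funext fun i => prod_congr rfl fun j hj =>
      prod_zpow_pow_toNat_neg _ _ _ (mem_filter.1 hj).2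
  have hcinv : c⁻¹ = fun j => ∏ l, t l ^ (-(∑ m, p l m * v j m)) :=
    funext fun j => by simp [c, zpow_neg, prod_inv_distrib]
  refine ⟨hμ ▸ hcinv ▸ hjac, ?_⟩
  rw [show (fun j => c j * z j) = c * z from rfl, hjac]
  exact Matrix.rank_diagonal_mul_mul_diagonal
    (fun i => prod_ne_zero_iff.2 fun j _ => pow_ne_zero _ (hc0 j)) (fun j => inv_ne_zero (hc0 j)) _
end

section
/- Let u_1,…,u_n, v_1,…,v_n ∈ ℤ^n with ⟨u_i, v_j⟩ = δ_{ij}, let p_1,…,p_k, q_{k+1},…,q_n ∈ ℤ^n with ⟨p_l, q_i⟩ = 0 for all l, i, and let a ∈ ℝ^n. Define f_i : ℂ^n → ℂ by f_i(z) = ∏_{j∈I⁺_i} z_j^{⟨u_j,q_i⟩} − e^{⟨a,q_i⟩} ∏_{j∈I⁻_i} z_j^{−⟨u_j,q_i⟩}, where I⁺_i = {j : ⟨u_j,q_i⟩ ≥ 0}, I⁻_i = {j : ⟨u_j,q_i⟩ ≤ 0}, and let Df(z) = (∂f_i/∂z_j(z)) be the (n−k)×n complex Jacobian matrix. Let C_λ(V)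 ⊂ ℂ^n be the image of w ↦ (exp(⟨a,v_i⟩ + ∑_l ⟨p_l,v_i⟩ w_l))_{i=1}^n, w ∈ ℂ^k. Then for every z in the topological closure of C_λ(V) in ℂ^n, the rank of Df(z) equals the rank of Df(|z|), where |z| = (|z_1|,…,|z_n|). -/
/-!
The exponents `e i j = ⟨u_j, q_i⟩` are orthogonal to the exponents `⟨p_l, v_j⟩` of the
parametrisation, because `u` and `v` are dual bases and `⟨p_l, q_i⟩ = 0`. Hence every point of
`C_λ(V)` has the form `t * |z|` with `t` in the compact torus `T = {t : |t_j| = 1, t^{e_i} = 1}`,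
and by compactness of `T` so does every point of the closure. For `t ∈ T` each binomial `f_i`
satisfies `f_i (t * w) = t^{e_i⁺} f_i w`, so `Df (t * r) * diag t = diag (t^{e_i⁺}) * Df r`,
and multiplying by invertible diagonal matrices does not change the rank.
-/

open Finset Matrix

section Monomial

variable {ι M : Type*} [Fintype ι] [CommMonoid M]

theorem prod_filter_nonneg_pow_toNat (e : ι → ℤ) (x : ι → M) :
    ∏ j ∈ univ.filter (fun j => 0 ≤ e j), x j ^ (e j).toNat = ∏ j, x j ^ (e j).toNat :=
  prod_filter_of_ne fun j _ hj => by
    by_contra h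
    exact hj (by rw [Int.toNat_of_nonpos (by omega), pow_zero])

theorem prod_filter_nonpos_pow_toNat_neg (e : ι → ℤ) (x : ι → M) :
    ∏ j ∈ univ.filter (fun j => e j ≤ 0), x j ^ (-e j).toNat = ∏ j, x j ^ (-e j).toNat :=
  prod_filter_of_ne fun j _ hj => by
    by_contra h
    exact hj (by rw [Int.toNat_of_nonpos (by omega), pow_zero])

end Monomial

section Binomial

variable {ι : Type*} [Fintype ι]

def binomial (α β : ι → ℕ) (c : ℂ) (z : ι → ℂ) : ℂ :=
  ∏ j, z j ^ α j - c * ∏ j, z j ^ β j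

theorem differentiable_binomial (α β : ι → ℕ) (c : ℂ) : Differentiable ℂ (binomial α β c) := by
  unfold binomial; fun_prop

theorem binomial_mul_of_prod_pow_eq {α β : ι → ℕ} (c : ℂ) {t : ι → ℂ}
    (ht : ∏ j, t j ^ α j = ∏ j, t j ^ β j) (w : ι → ℂ) :
    binomial α β c (t * w) = (∏ j, t j ^ α j) * binomial α β c w := by
  simp only [binomial, Pi.mul_apply, mul_pow, prod_mul_distrib]
  rw [← ht]; ring

end Binomial

theorem fderiv_mul_apply_mul_of_map_mul {𝕜 𝔸 F : Type*} [NontriviallyNormedField 𝕜]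
    [NormedRing 𝔸] [NormedAlgebra 𝕜 𝔸] [NormedAddCommGroup F] [NormedSpace 𝕜 F]
    {g : 𝔸 → F} (hg : Differentiable 𝕜 g) {t : 𝔸} {τ : 𝕜} (hgt : ∀ w, g (t * w) = τ • g w)
    (r v : 𝔸) : fderiv 𝕜 g (t * r) (t * v) = τ • fderiv 𝕜 g r v := by
  have hcomp : HasFDerivAt (fun w => g (t * w)) ((fderiv 𝕜 g (t * r)).comp
      (t • ContinuousLinearMap.id 𝕜 𝔸)) r :=
    (hg _).hasFDerivAt.comp r ((hasFDerivAt_id r).const_mul t)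
  have hsmul : HasFDerivAt (fun w => g (t * w)) (τ • fderiv 𝕜 g r) r := by
    rw [show (fun w => g (t * w)) = τ • g from funext hgt]
    exact (hg r).hasFDerivAt.const_smul τ
  simpa using congrArg (· v) (hcomp.unique hsmul)

theorem Matrix.rank_eq_of_mul_diagonal_eq_diagonal_mul {m n R : Type*} [Fintype m] [Fintype n]
    [DecidableEq m] [DecidableEq n] [CommRing R] [IsDomain R] {A B : Matrix m n R}
    {s : n → R} {τ : m → R} (hs : ∀ j, s j ≠ 0) (hτ : ∀ i, τ i ≠ 0)
    (h : A * diagonal s = diagonal τ * B) : A.rank = B.rank := by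
  rw [← rank_mul_eq_left_of_det_ne_zero (diagonal s) A (by simpa [prod_ne_zero_iff]), h,
    rank_mul_eq_right_of_det_ne_zero (diagonal τ) B (by simpa [prod_ne_zero_iff])]

theorem Matrix.mul_transpose_mul_mul_transpose {ι m κ R : Type*} [Fintype ι] [DecidableEq ι]
    [CommRing R] {U V : Matrix ι ι R} (hUV : U * Vᵀ = 1) (Q : Matrix m ι R) (P : Matrix κ ι R) :
    Q * Uᵀ * (P * Vᵀ)ᵀ = Q * Pᵀ := by
  have hVU : Uᵀ * V = 1 := by
    simpa using congrArg transpose (mul_eq_one_comm.mp hUV)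
  rw [transpose_mul, transpose_transpose, Matrix.mul_assoc, ← Matrix.mul_assoc Uᵀ, hVU,
    Matrix.one_mul]

section Jacobian

variable {𝕜 m ι : Type*} [NontriviallyNormedField 𝕜] [Fintype m] [Fintype ι]
  [DecidableEq m] [DecidableEq ι]

noncomputable def jacobian (f : m → (ι → 𝕜) → 𝕜) (z : ι → 𝕜) : Matrix m ι 𝕜 :=
  of fun i j => fderiv 𝕜 (f i) z (Pi.single j 1)

theorem rank_jacobian_mul_eq {f : m → (ι → 𝕜) → 𝕜} (hf : ∀ i, Differentiable 𝕜 (f i))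
    {t : ι → 𝕜} {τ : m → 𝕜} (ht : ∀ j, t j ≠ 0) (hτ : ∀ i, τ i ≠ 0)
    (hft : ∀ i w, f i (t * w) = τ i * f i w) (r : ι → 𝕜) :
    (jacobian f (t * r)).rank = (jacobian f r).rank := by
  refine rank_eq_of_mul_diagonal_eq_diagonal_mul ht hτ ?_
  ext i j
  have hsingle : t * Pi.single j 1 = t j • Pi.single j 1 := by
    ext k; by_cases h : k = j <;> simp [h]
  have := fderiv_mul_apply_mul_of_map_mul (hf i) (hft i) r (Pi.single j 1)
  rw [hsingle, map_smul] at this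
  simpa [jacobian, mul_diagonal, diagonal_mul, mul_comm] using this

end Jacobian

section Torus

variable {m ι : Type*} [Fintype ι]

-- `t ^ e i = 1` for every `i`, written without negative powers
def unitSubtorus (e : m → ι → ℤ) : Set (ι → ℂ) :=
  {t | (∀ j, ‖t j‖ = 1) ∧ ∀ i, ∏ j, t j ^ (e i j).toNat = ∏ j, t j ^ (-e i j).toNat}

theorem ne_zero_of_mem_unitSubtorus {e : m → ι → ℤ} {t : ι → ℂ} (ht : t ∈ unitSubtorus e)
    (j : ι) : t j ≠ 0 :=
  norm_ne_zero_iff.mp (by rw [ht.1 j]; exact one_ne_zero)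

theorem isCompact_unitSubtorus (e : m → ι → ℤ) : IsCompact (unitSubtorus e) := by
  have hclosed : IsClosed (unitSubtorus e) := by
    simp only [unitSubtorus, Set.ofPred_and, Set.ofPred_forall]
    exact (isClosed_iInter fun j => isClosed_eq (by fun_prop) continuous_const).inter
      (isClosed_iInter fun i => isClosed_eq (by fun_prop) (by fun_prop))
  refine (isCompact_univ_pi fun _ => isCompact_sphere (0 : ℂ) 1).of_isClosed_subset hclosed ?_
  intro t ht j _
  simpa using ht.1 j

theorem prod_exp_mul_I_pow (θ : ι → ℝ) (α : ι → ℕ) :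
    ∏ j, Complex.exp (θ j * Complex.I) ^ α j =
      Complex.exp ((∑ j, α j * θ j : ℝ) * Complex.I) := by
  simp only [← Complex.exp_nat_mul, ← Complex.exp_sum]
  push_cast
  simp only [sum_mul, mul_assoc]

theorem exp_mul_I_mem_unitSubtorus {e : m → ι → ℤ} {θ : ι → ℝ}
    (h : ∀ i, ∑ j, (e i j : ℝ) * θ j = 0) :
    (fun j => Complex.exp (θ j * Complex.I)) ∈ unitSubtorus e := by
  refine ⟨fun j => Complex.norm_exp_ofReal_mul_I (θ j), fun i => ?_⟩
  rw [prod_exp_mul_I_pow, prod_exp_mul_I_pow]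
  have hsplit : ∀ j, (e i j : ℝ) = (e i j).toNat - (-e i j).toNat := fun j => by
    exact_mod_cast (Int.toNat_sub_toNat_neg (e i j)).symm
  have hi := h i
  simp only [hsplit, sub_mul, sum_sub_distrib, sub_eq_zero] at hi
  rw [hi]

end Torus

theorem IsCompact.isClosed_setOf_exists_mul_norm {ι : Type*} {T : Set (ι → ℂ)}
    (hT : IsCompact T) :
    IsClosed {z : ι → ℂ | ∃ t ∈ T, z = t * fun j => ((‖z j‖ : ℝ) : ℂ)} := by
  have : CompactSpace T := isCompact_iff_compactSpace.mp hT
  have hgraph :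
      IsClosed {p : T × (ι → ℂ) | p.2 = (p.1 : ι → ℂ) * fun j => ((‖p.2 j‖ : ℝ) : ℂ)} :=
    isClosed_eq (by fun_prop) (by fun_prop)
  convert isClosedMap_snd_of_compactSpace _ hgraph using 1
  ext z
  simp

theorem exp_eq_exp_im_mul_I_mul_norm (ζ : ℂ) :
    Complex.exp ζ = Complex.exp (ζ.im * Complex.I) * ((‖Complex.exp ζ‖ : ℝ) : ℂ) := by
  rw [Complex.norm_exp, Complex.ofReal_exp, ← Complex.exp_add]
  congr 1
  rw [add_comm, Complex.re_add_im]

theorem range_exp_subset_setOf_exists_mul_norm {m ι κ : Type*} [Fintype ι] [Fintype κ]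
    {e : m → ι → ℤ} {P : κ → ι → ℤ} (heP : ∀ i l, ∑ j, e i j * P l j = 0) (b : ι → ℝ) :
    Set.range (fun (w : κ → ℂ) j => Complex.exp (b j + ∑ l, (P l j : ℂ) * w l)) ⊆
      {z | ∃ t ∈ unitSubtorus e, z = t * fun j => ((‖z j‖ : ℝ) : ℂ)} := by
  rintro _ ⟨w, rfl⟩
  set θ : ι → ℝ := fun j => ∑ l, (P l j : ℝ) * (w l).im
  have hθ : ∀ i, ∑ j, (e i j : ℝ) * θ j = 0 := fun i => by
    have heP' : ∀ l, ∑ j, (e i j : ℝ) * P l j = 0 := fun l => by exact_mod_cast heP i l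
    simp only [θ, mul_sum, ← mul_assoc]
    rw [sum_comm]
    simp only [← sum_mul, heP', zero_mul, sum_const_zero]
  refine ⟨_, exp_mul_I_mem_unitSubtorus hθ, funext fun j => ?_⟩
  dsimp only
  conv_lhs => rw [exp_eq_exp_im_mul_I_mul_norm]
  simp [θ]

theorem rank_jacobian_binomial_mul_eq {m ι : Type*} [Fintype m] [Fintype ι] [DecidableEq m]
    [DecidableEq ι] {e : m → ι → ℤ} (c : m → ℂ) {t : ι → ℂ} (ht : t ∈ unitSubtorus e)
    (r : ι → ℂ) :
    (jacobian (fun i => binomial (fun j => (e i j).toNat) (fun j => (-e i j).toNat) (c i))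
        (t * r)).rank =
      (jacobian (fun i => binomial (fun j => (e i j).toNat) (fun j => (-e i j).toNat) (c i))
        r).rank :=
  rank_jacobian_mul_eq (fun _ => differentiable_binomial _ _ _)
    (ne_zero_of_mem_unitSubtorus ht)
    (fun _ => prod_ne_zero_iff.mpr fun j _ => pow_ne_zero _ (ne_zero_of_mem_unitSubtorus ht j))
    (fun i => binomial_mul_of_prod_pow_eq (c i) (ht.2 i)) r

/-- On the closure of the local model `C_λ(V)` of the complex subtorus, the
rank of the Jacobian matrix `Df` at `z` equals its rank at `|z| = (|z 1|, …, |z n|)`. -/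
theorem stmt6 (n k : ℕ)
    (u v : Fin n → Fin n → ℤ)
    (hδ : ∀ i j, ∑ m, u i m * v j m = if i = j then (1 : ℤ) else 0)
    (p : Fin k → Fin n → ℤ) (q : Fin (n - k) → Fin n → ℤ)
    (hpq : ∀ (l : Fin k) (i : Fin (n - k)), ∑ m, p l m * q i m = 0)
    (a : Fin n → ℝ)
    (f : Fin (n - k) → (Fin n → ℂ) → ℂ)
    (hf : ∀ i z, f i z =
      (∏ j ∈ univ.filter fun j => 0 ≤ ∑ m, u j m * q i m,
        z j ^ (∑ m, u j m * q i m).toNat)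
      - (Real.exp (∑ m, a m * (q i m : ℝ)) : ℂ) *
        ∏ j ∈ univ.filter fun j => (∑ m, u j m * q i m) ≤ 0,
          z j ^ (-∑ m, u j m * q i m).toNat)
    (Df : (Fin n → ℂ) → Matrix (Fin (n - k)) (Fin n) ℂ)
    (hDf : ∀ z, Df z = Matrix.of fun i j => fderiv ℂ (f i) z (Pi.single j 1))
    (F : (Fin k → ℂ) → (Fin n → ℂ))
    (hF : ∀ w i, F w i = Complex.exp
      (((∑ m, a m * (v i m : ℝ) : ℝ) : ℂ) + ∑ l, ((∑ m, p l m * v i m : ℤ) : ℂ) * w l)) :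
    ∀ z ∈ closure (Set.range F),
      (Df z).rank = (Df fun i => ((‖z i‖ : ℝ) : ℂ)).rank := by
  set e : Fin (n - k) → Fin n → ℤ := fun i j => ∑ m, u j m * q i m
  have horth : ∀ i l, ∑ j, e i j * ∑ m, p l m * v j m = 0 := fun i l => by
    have hUV : of u * (of v)ᵀ = 1 := by ext i j; simp [mul_apply, one_apply, hδ]
    have := congrFun₂ (mul_transpose_mul_mul_transpose hUV (of q) (of p)) i l
    simp only [mul_apply, transpose_apply, of_apply] at this
    rw [show ∑ m, q i m * p l m = 0 by simpa only [mul_comm] using hpq l i] at this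
    simpa only [e, mul_comm (q i _)] using this
  have hf' : f = fun i => binomial (fun j => (e i j).toNat) (fun j => (-e i j).toNat)
      (Real.exp (∑ m, a m * (q i m : ℝ))) := by
    ext i z
    rw [hf, binomial, prod_filter_nonneg_pow_toNat, prod_filter_nonpos_pow_toNat_neg]
  have hF' : F = fun w j => Complex.exp ((∑ m, a m * (v j m : ℝ) : ℝ) +
      ∑ l, ((∑ m, p l m * v j m : ℤ) : ℂ) * w l) := funext₂ hF
  have hDf' : Df = jacobian f := funext hDf
  subst hDf' hf' hF'
  intro z hz
  obtain ⟨t, ht, hzt⟩ :=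
    (isCompact_unitSubtorus e).isClosed_setOf_exists_mul_norm.closure_subset_iff.mpr
      (range_exp_subset_setOf_exists_mul_norm horth _) hz
  nth_rewrite 1 [hzt]
  exact rank_jacobian_binomial_mul_eq _ ht _
end
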